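/- In two dimensions, the Coulomb friction law in the tangential direction is equivalent to the vanishing of the complementarity function C_τ(T_τ, d) = T_τ·max(b, ‖-T_τ + c·d‖) - b·(-T_τ + c·d)·(-1), namely, for b > 0 and c > 0, C_τ = 0 if and only if (‖T_τ‖ ≤ b) and (‖T_τ‖ < b → d = 0) and (‖T_τ‖ = b → ∃ ζ ≥ 0, d = -ζ·T_τ·(1/‖T_τ‖)). -/

import Mathlib

/-- The tangential Coulomb friction law is equivalent to the vanishing of the
tangential complementarity function
`C_τ(T_τ,d) = max(b, ‖-T_τ + c·d‖) • T_τ + b • (-T_τ + c·d)`. -/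
theorem tangential_ncp_equivalence
    (b c : ℝ) (hb : 0 < b) (hc : 0 < c)
    (Tτ d : EuclideanSpace ℝ (Fin 2)) :
    (max b ‖-Tτ + c • d‖) • Tτ + b • (-Tτ + c • d) = 0 ↔
      (‖Tτ‖ ≤ b ∧ (‖Tτ‖ < b → d = 0) ∧
        (‖Tτ‖ = b → ∃ ζ : ℝ, 0 ≤ ζ ∧ d = -(ζ / ‖Tτ‖) • Tτ)) := by
  have hb' : b ≠ 0 := hb.ne'
  have hc' : c ≠ 0 := hc.ne'
  set v : EuclideanSpace ℝ (Fin 2) := -Tτ + c • d with hv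
  constructor
  · intro h
    have hm : b ≤ max b ‖v‖ := le_max_left _ _
    have hbv : b • v = -((max b ‖v‖) • Tτ) := by
      rw [add_comm] at h; exact eq_neg_of_add_eq_zero_left h
    have hveq : v = (-(max b ‖v‖ / b)) • Tτ := by
      calc v = b⁻¹ • (b • v) := by
              rw [smul_smul, inv_mul_cancel₀ hb', one_smul]
        _ = b⁻¹ • (-((max b ‖v‖) • Tτ)) := by rw [hbv]
        _ = (-(max b ‖v‖ / b)) • Tτ := by
              rw [smul_neg, smul_smul, ← neg_smul, div_eq_inv_mul]
    have hnv : ‖v‖ = (max b ‖v‖ / b) * ‖Tτ‖ := by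
      conv_lhs => rw [hveq]
      rw [norm_smul, Real.norm_eq_abs, abs_neg,
        abs_of_pos (div_pos (lt_of_lt_of_le hb hm) hb)]
    rcases le_or_gt ‖v‖ b with hle | hlt
    · have hmax : max b ‖v‖ = b := max_eq_left hle
      have hveq' : v = -Tτ := by
        conv_lhs => rw [hveq]
        rw [hmax, div_self hb', neg_smul, one_smul]
      have hd0 : d = 0 := by
        have hcd : c • d = 0 := by
          have h2 : -Tτ + c • d = -Tτ := hv ▸ hveq'
          have := congrArg (fun x => Tτ + x) h2
          simpa using this
        rcases smul_eq_zero.mp hcd with h | h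
        · exact absurd h hc'
        · exact h
      have hTle : ‖Tτ‖ ≤ b := by rw [← norm_neg Tτ, ← hveq']; exact hle
      exact ⟨hTle, fun _ => hd0, fun _ => ⟨0, le_refl 0, by simp [hd0]⟩⟩
    · have hv0 : 0 < ‖v‖ := lt_trans hb hlt
      have hmax : max b ‖v‖ = ‖v‖ := max_eq_right hlt.le
      rw [hmax] at hveq hnv
      have hT : ‖Tτ‖ = b := by
        have h3 : ‖v‖ / b * ‖Tτ‖ = ‖v‖ / b * b := by
          rw [div_mul_cancel₀ _ hb', ← hnv]
        exact mul_left_cancel₀ (div_pos hv0 hb).ne' h3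
      refine ⟨hT.le, fun hlt' => absurd hT hlt'.ne, fun _ => ?_⟩
      refine ⟨(‖v‖ - b) / c, div_nonneg (by linarith) hc.le, ?_⟩
      have hcd : c • d = v + Tτ := by rw [hv]; abel
      have hsum : v + Tτ = (1 - ‖v‖ / b) • Tτ := by
        conv_lhs => rw [hveq]
        module
      have hd : d = (c⁻¹ * (1 - ‖v‖ / b)) • Tτ := by
        calc d = c⁻¹ • (c • d) := by
                rw [smul_smul, inv_mul_cancel₀ hc', one_smul]
          _ = c⁻¹ • (v + Tτ) := by rw [hcd]
          _ = (c⁻¹ * (1 - ‖v‖ / b)) • Tτ := by rw [hsum, smul_smul]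
      rw [hd, hT]
      congr 1
      field_simp
      ring
  · rintro ⟨h1, h2, h3⟩
    rcases lt_or_eq_of_le h1 with hlt | heq
    · have hd0 := h2 hlt
      subst hd0
      have hveq : v = -Tτ := by rw [hv]; simp
      have hnv : ‖v‖ = ‖Tτ‖ := by rw [hveq, norm_neg]
      rw [max_eq_left (by rw [hnv]; exact hlt.le), hveq]
      simp
    · obtain ⟨ζ, hζ, hd⟩ := h3 heq
      have hveq : v = (-(1 + c * ζ / b)) • Tτ := by
        conv_lhs => rw [hv, hd]
        rw [heq]
        match_scalars
        field_simp
        ring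
      have hnv : ‖v‖ = b + c * ζ := by
        conv_lhs => rw [hveq]
        rw [norm_smul, Real.norm_eq_abs, abs_neg, heq,
          abs_of_pos (by positivity)]
        field_simp
      have hcz : 0 ≤ c * ζ := mul_nonneg hc.le hζ
      rw [hnv, max_eq_right (by linarith), hveq]
      match_scalars
      field_simp
      ring
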